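/- arXiv:2601.15840 — 3 statements merged into one kernel-verified Lean document; each statement's English description precedes it below -/
import Mathlib

section
/- Let H be a finite-dimensional Hilbert space, A a unital C*-algebra, G a group acting on A via τ, and φ a C*-extreme point of the set UCP^{G_τ}(A, B(H)) of G-invariant unital completely positive maps. Then φ is a linear extreme point of UCP^{G_τ}(A, B(H)): whenever φ = λφ₁ + (1−λ)φ₂ with φ₁, φ₂ ∈ UCP^{G_τ}(A, B(H)) and λ ∈ (0,1), one has φ₁ = φ₂ = φ. -/
open scoped ComplexOrder

noncomputable section

variable {G : Type} [Group G]
variable {A : Type} [Ring A] [StarRing A] [Algebra ℂ A]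
variable {H : Type} [NormedAddCommGroup H] [InnerProductSpace ℂ H] [CompleteSpace H]

/-- Complete positivity of a linear map into `B(H)`. -/
def IsCPMap (φ : A →ₗ[ℂ] (H →L[ℂ] H)) : Prop :=
  ∀ (n : ℕ) (a : Fin n → A) (h : Fin n → H),
    0 ≤ ∑ i, ∑ j, (inner ℂ ((φ (star (a i) * a j)) (h j)) (h i) : ℂ)

/-- Unital completely positive map. -/
def IsUCPMap (φ : A →ₗ[ℂ] (H →L[ℂ] H)) : Prop :=
  IsCPMap φ ∧ φ 1 = 1

/-- `G`-invariance of a map with respect to an action `τ` of `G` on `A`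
by `*`-automorphisms. -/
def IsGInvariant (τ : G → (A ≃⋆ₐ[ℂ] A)) (φ : A →ₗ[ℂ] (H →L[ℂ] H)) : Prop :=
  ∀ (g : G) (a : A), φ (τ g a) = φ a

/-- The set `UCP^{G_τ}(A, B(H))` of `G`-invariant unital completely positive maps. -/
def UCPG (τ : G → (A ≃⋆ₐ[ℂ] A)) : Set (A →ₗ[ℂ] (H →L[ℂ] H)) :=
  {φ | IsUCPMap φ ∧ IsGInvariant τ φ}

/-- Unitary equivalence of maps into `B(H)`: `ψ = U* φ U`. -/
def UnitarilyEquiv (φ ψ : A →ₗ[ℂ] (H →L[ℂ] H)) : Prop :=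
  ∃ U ∈ unitary (H →L[ℂ] H), ∀ a, ψ a = star U * φ a * U

/-- `φ` is a C*-extreme point of `S`: every proper C*-convex decomposition of `φ`
into members of `S` has all components unitarily equivalent to `φ`. -/
def IsCStarExtreme (S : Set (A →ₗ[ℂ] (H →L[ℂ] H))) (φ : A →ₗ[ℂ] (H →L[ℂ] H)) : Prop :=
  φ ∈ S ∧ ∀ (n : ℕ) (ψ : Fin n → (A →ₗ[ℂ] (H →L[ℂ] H))) (T : Fin n → (H →L[ℂ] H)),
    (∀ i, ψ i ∈ S) → (∀ i, IsUnit (T i)) →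
    (∑ i, star (T i) * T i) = 1 →
    (∀ a, φ a = ∑ i, star (T i) * (ψ i a) * T i) →
    ∀ i, UnitarilyEquiv φ (ψ i)

/-!
Writing `φ = l φ₁ + (1 - l) φ₂` as the C*-convex combination with coefficients `√l • 1` and
`√(1 - l) • 1`, C*-extremality makes `φ₁ = U* φ U` and `φ₂ = V* φ V` for unitaries `U`, `V`.
Pointwise, `φ a` is then a proper convex combination of two points of its unitary orbit. In finite
dimension these all have the same Hilbert–Schmidt norm, which comes from an inner product and is
therefore strictly convex, so both points equal `φ a`.
-/

section HilbertSchmidt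

variable {𝕜 : Type*} [RCLike 𝕜] {E F : Type*} [NormedAddCommGroup E] [InnerProductSpace 𝕜 E]
  [NormedAddCommGroup F] [InnerProductSpace 𝕜 F] {ι : Type*} [Fintype ι]

open ContinuousLinearMap

theorem eq_of_eq_convex_combo_of_norm_le {x y₁ y₂ : E} {a : ℝ} (ha₀ : 0 < a) (ha₁ : a < 1)
    (hx : x = (a : 𝕜) • y₁ + ((1 - a : ℝ) : 𝕜) • y₂) (h₁ : ‖y₁‖ ≤ ‖x‖) (h₂ : ‖y₂‖ ≤ ‖x‖) :
    y₁ = x ∧ y₂ = x := by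
  let _ := InnerProductSpace.rclikeToReal 𝕜 E
  rw [← RCLike.real_smul_eq_coe_smul, ← RCLike.real_smul_eq_coe_smul] at hx
  have hy : y₁ = y₂ := by
    by_contra hne
    exact (norm_combo_lt_of_ne h₁ h₂ hne ha₀ (sub_pos.2 ha₁) (add_sub_cancel a 1)).ne
      (congrArg _ hx.symm)
  subst hy
  rw [← add_smul, add_sub_cancel, one_smul] at hx
  exact ⟨hx.symm, hx.symm⟩

def hilbertSchmidtVec (b : OrthonormalBasis ι 𝕜 E) : (E →L[𝕜] F) →ₗ[𝕜] PiLp 2 (fun _ : ι => F) where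
  toFun X := WithLp.toLp 2 fun i => X (b i)
  map_add' _ _ := rfl
  map_smul' _ _ := rfl

@[simp]
theorem hilbertSchmidtVec_apply (b : OrthonormalBasis ι 𝕜 E) (X : E →L[𝕜] F) (i : ι) :
    hilbertSchmidtVec b X i = X (b i) := rfl

theorem hilbertSchmidtVec_injective (b : OrthonormalBasis ι 𝕜 E) :
    Function.Injective (hilbertSchmidtVec (F := F) b) := fun _ _ h =>
  coe_injective <| b.toBasis.ext fun i => by
    simpa using congrArg (fun v : PiLp 2 (fun _ : ι => F) => v i) h

theorem norm_sq_hilbertSchmidtVec [CompleteSpace E] [CompleteSpace F] (b : OrthonormalBasis ι 𝕜 E)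
    (X : E →L[𝕜] F) :
    ‖hilbertSchmidtVec b X‖ ^ 2 = RCLike.re (LinearMap.trace 𝕜 E (adjoint X ∘L X)) := by
  rw [PiLp.norm_sq_eq_of_L2, LinearMap.trace_eq_sum_inner _ b, map_sum]
  refine Finset.sum_congr rfl fun i _ => ?_
  simp [adjoint_inner_right]

theorem norm_hilbertSchmidtVec_unitary_conj [CompleteSpace E] (b : OrthonormalBasis ι 𝕜 E)
    (X : E →L[𝕜] E) {U : E →L[𝕜] E} (hU : U ∈ unitary (E →L[𝕜] E)) :
    ‖hilbertSchmidtVec b (star U * X * U)‖ = ‖hilbertSchmidtVec b X‖ := by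
  have hconj : star (star U * X * U) * (star U * X * U) = star U * (star X * X * U) := by
    simp only [star_mul, star_star, mul_assoc]
    rw [← mul_assoc U, Unitary.mul_star_self_of_mem hU, one_mul]
  rw [← sq_eq_sq₀ (norm_nonneg _) (norm_nonneg _), norm_sq_hilbertSchmidtVec,
    norm_sq_hilbertSchmidtVec, ← star_eq_adjoint, ← mul_def, hconj, toLinearMap_mul,
    LinearMap.trace_mul_comm, ← toLinearMap_mul, mul_assoc, Unitary.mul_star_self_of_mem hU,
    mul_one, star_eq_adjoint, mul_def]

theorem unitary_conj_eq_of_eq_convex_combo [FiniteDimensional 𝕜 E] [CompleteSpace E]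
    {X U V : E →L[𝕜] E} (hU : U ∈ unitary (E →L[𝕜] E)) (hV : V ∈ unitary (E →L[𝕜] E))
    {l : ℝ} (hl₀ : 0 < l) (hl₁ : l < 1)
    (hX : X = (l : 𝕜) • (star U * X * U) + ((1 - l : ℝ) : 𝕜) • (star V * X * V)) :
    star U * X * U = X ∧ star V * X * V = X := by
  let b := stdOrthonormalBasis 𝕜 E
  have hXvec := congrArg (hilbertSchmidtVec b) hX
  rw [map_add, map_smul, map_smul] at hXvec
  obtain ⟨hUX, hVX⟩ := eq_of_eq_convex_combo_of_norm_le hl₀ hl₁ hXvec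
    (norm_hilbertSchmidtVec_unitary_conj b X hU).le (norm_hilbertSchmidtVec_unitary_conj b X hV).le
  exact ⟨hilbertSchmidtVec_injective b hUX, hilbertSchmidtVec_injective b hVX⟩

end HilbertSchmidt

theorem star_algebraMap_ofReal_mul_mul {B : Type*} [Ring B] [StarRing B] [Algebra ℂ B]
    [StarModule ℂ B] (r : ℝ) (x : B) :
    star (algebraMap ℂ B r) * x * algebraMap ℂ B r = ((r * r : ℝ) : ℂ) • x := by
  rw [← algebraMap_star_comm, Complex.star_def, Complex.conj_ofReal, Algebra.commutes, mul_assoc,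
    ← map_mul, ← Algebra.commutes, ← Algebra.smul_def, Complex.ofReal_mul]

theorem IsCStarExtreme.unitarilyEquiv_of_eq_convex_combo {A : Type} [Ring A] [Algebra ℂ A]
    {H : Type} [NormedAddCommGroup H] [InnerProductSpace ℂ H] [CompleteSpace H]
    {S : Set (A →ₗ[ℂ] (H →L[ℂ] H))}
    {φ φ₁ φ₂ : A →ₗ[ℂ] (H →L[ℂ] H)} (hφ : IsCStarExtreme S φ) (h₁ : φ₁ ∈ S) (h₂ : φ₂ ∈ S)
    {l : ℝ} (hl₀ : 0 < l) (hl₁ : l < 1)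
    (hdecomp : ∀ a, φ a = (l : ℂ) • φ₁ a + ((1 - l : ℝ) : ℂ) • φ₂ a) :
    UnitarilyEquiv φ φ₁ ∧ UnitarilyEquiv φ φ₂ := by
  let T : Fin 2 → (H →L[ℂ] H) :=
    ![algebraMap ℂ _ (Real.sqrt l : ℂ), algebraMap ℂ _ (Real.sqrt (1 - l) : ℂ)]
  have hconj (x : H →L[ℂ] H) :
      star (T 0) * x * T 0 = (l : ℂ) • x ∧ star (T 1) * x * T 1 = ((1 - l : ℝ) : ℂ) • x := by
    simp [T, star_algebraMap_ofReal_mul_mul, Real.mul_self_sqrt hl₀.le,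
      Real.mul_self_sqrt (sub_nonneg.2 hl₁.le)]
  have hunit (i : Fin 2) : IsUnit (T i) := by
    fin_cases i <;> refine (isUnit_iff_ne_zero.2 ?_).map (algebraMap ℂ _) <;>
      simp [Real.sqrt_eq_zero', hl₀, hl₁]
  have hsum : ∑ i, star (T i) * T i = 1 := by
    calc ∑ i, star (T i) * T i = ∑ i, star (T i) * 1 * T i := by simp only [mul_one]
      _ = 1 := by rw [Fin.sum_univ_two, (hconj 1).1, (hconj 1).2, ← add_smul]; simp
  have hequiv := hφ.2 2 ![φ₁, φ₂] T (by simp [Fin.forall_fin_two, h₁, h₂]) hunit hsum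
    (fun a => by rw [Fin.sum_univ_two]; simp [(hconj _).1, (hconj _).2, hdecomp a])
  exact ⟨hequiv 0, hequiv 1⟩

/-- on a finite-dimensional Hilbert space, every C*-extreme point of
`UCP^{G_τ}(A, B(H))` is a linear extreme point. -/
theorem cstarExtreme_is_linear_extreme [FiniteDimensional ℂ H]
    (τ : G → (A ≃⋆ₐ[ℂ] A)) (φ : A →ₗ[ℂ] (H →L[ℂ] H))
    (hφ : IsCStarExtreme (UCPG τ) φ) :
    ∀ φ₁ φ₂ : A →ₗ[ℂ] (H →L[ℂ] H), φ₁ ∈ UCPG τ → φ₂ ∈ UCPG τ →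
      ∀ l : ℝ, 0 < l → l < 1 →
      (∀ a : A, φ a = (l : ℂ) • φ₁ a + ((1 - l : ℝ) : ℂ) • φ₂ a) →
      φ₁ = φ ∧ φ₂ = φ := by
  intro φ₁ φ₂ h₁ h₂ l hl₀ hl₁ hdecomp
  obtain ⟨⟨U, hU, hφ₁⟩, ⟨V, hV, hφ₂⟩⟩ :=
    hφ.unitarilyEquiv_of_eq_convex_combo h₁ h₂ hl₀ hl₁ hdecomp
  have hpoint (a : A) : φ₁ a = φ a ∧ φ₂ a = φ a := by
    rw [hφ₁ a, hφ₂ a]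
    refine unitary_conj_eq_of_eq_convex_combo hU hV hl₀ hl₁ ?_
    rw [← hφ₁ a, ← hφ₂ a]
    exact hdecomp a
  exact ⟨LinearMap.ext fun a => (hpoint a).1, LinearMap.ext fun a => (hpoint a).2⟩
end
end

section
/- Let φ ∈ UCP^{G_τ}(A, B(H)) be pure as an element of CP(A, B(H)) (i.e., any completely positive θ with θ ≤ φ is a scalar multiple of φ). Then φ is a C*-extreme point of UCP^{G_τ}(A, B(H)). -/
open scoped ComplexOrder

noncomputable section

variable {G : Type} [Group G]
variable {A : Type} [Ring A] [StarRing A] [Algebra ℂ A]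
variable {H : Type} [NormedAddCommGroup H] [InnerProductSpace ℂ H] [CompleteSpace H]

/-! A pure `φ` dominates each summand `T_i* ψ_i(·) T_i` of a decomposition `φ = Σ T_j* ψ_j(·) T_j`,
so that summand equals `t • φ` for some `t ∈ [0, 1]`. Evaluating at `1` gives `T_i* T_i = t`, and
`t ≠ 0` because `T_i` is invertible; hence `T_i / √t` is an invertible isometry, i.e. a unitary,
which conjugates `ψ_i` into `φ`. -/

def starConj (T : H →L[ℂ] H) : (H →L[ℂ] H) →ₗ[ℂ] (H →L[ℂ] H) where
  toFun X := star T * X * T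
  map_add' X Y := by noncomm_ring
  map_smul' c X := by simp only [mul_smul_comm, smul_mul_assoc, RingHom.id_apply]

@[simp]
lemma starConj_apply (T X : H →L[ℂ] H) : starConj T X = star T * X * T := rfl

namespace IsCPMap

omit [CompleteSpace H] in
lemma zero : IsCPMap (0 : A →ₗ[ℂ] (H →L[ℂ] H)) := by
  intro n a h
  simp

omit [CompleteSpace H] in
lemma add {φ ψ : A →ₗ[ℂ] (H →L[ℂ] H)} (hφ : IsCPMap φ) (hψ : IsCPMap ψ) :
    IsCPMap (φ + ψ) := by
  intro n a h
  simpa only [LinearMap.add_apply, add_apply, inner_add_left,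
    Finset.sum_add_distrib] using add_nonneg (hφ n a h) (hψ n a h)

omit [CompleteSpace H] in
lemma sum {ι : Type*} {s : Finset ι} {φ : ι → A →ₗ[ℂ] (H →L[ℂ] H)}
    (h : ∀ i ∈ s, IsCPMap (φ i)) : IsCPMap (∑ i ∈ s, φ i) :=
  Finset.sum_induction φ IsCPMap (fun _ _ => add) zero h

omit [CompleteSpace H] in
lemma sum_sub_of_mem {ι : Type*} [DecidableEq ι] {s : Finset ι} {φ : ι → A →ₗ[ℂ] (H →L[ℂ] H)}
    (h : ∀ i ∈ s, IsCPMap (φ i)) {i : ι} (hi : i ∈ s) : IsCPMap (∑ j ∈ s, φ j - φ i) := by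
  rw [← Finset.sum_erase_eq_sub hi]
  exact sum fun j hj => h j (Finset.mem_of_mem_erase hj)

lemma starConj_comp {ψ : A →ₗ[ℂ] (H →L[ℂ] H)} (T : H →L[ℂ] H) (hψ : IsCPMap ψ) :
    IsCPMap (starConj T ∘ₗ ψ) := by
  intro n a h
  simpa only [LinearMap.comp_apply, starConj_apply, mul_apply_eq_comp,
    ContinuousLinearMap.star_eq_adjoint, ContinuousLinearMap.adjoint_inner_left]
    using hψ n a (fun k => T (h k))

end IsCPMap

section UnitarilyEquiv

variable {φ ψ : A →ₗ[ℂ] (H →L[ℂ] H)}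

omit [StarRing A] in
lemma unitarilyEquiv_of_star_mul_mul_eq {V : H →L[ℂ] H} (hV : IsUnit V)
    (hφ : φ 1 = 1) (hψ : ψ 1 = 1) (h : ∀ a, star V * ψ a * V = φ a) :
    UnitarilyEquiv φ ψ := by
  have hVu : V ∈ unitary (H →L[ℂ] H) :=
    hV.mem_unitary_of_star_mul_self (by simpa [hφ, hψ] using h 1)
  refine ⟨star V, Unitary.star_mem hVu, fun a => ?_⟩
  rw [star_star, ← h a]
  calc ψ a = (V * star V) * ψ a * (V * star V) := by simp [Unitary.mul_star_self_of_mem hVu]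
    _ = V * (star V * ψ a * V) * star V := by noncomm_ring

omit [StarRing A] in
lemma unitarilyEquiv_of_star_mul_mul_eq_smul {T : H →L[ℂ] H} (hT : IsUnit T) {t : ℝ}
    (ht : 0 ≤ t) (hφ : φ 1 = 1) (hψ : ψ 1 = 1) (h : ∀ a, star T * ψ a * T = (t : ℂ) • φ a) :
    UnitarilyEquiv φ ψ := by
  rcases ht.eq_or_lt with rfl | ht
  · have : Subsingleton (H →L[ℂ] H) := by
      have hTT : star T * T = 0 := by simpa [hψ] using h 1
      exact subsingleton_of_zero_eq_one (isUnit_zero_iff.mp (hTT ▸ hT.star.mul hT))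
    exact ⟨1, one_mem _, fun a => Subsingleton.elim _ _⟩
  set c : ℂ := (((√t)⁻¹ : ℝ) : ℂ) with hc_def
  have hc : c ≠ 0 := by positivity
  have hcct : c * c * t = 1 := by
    have : (√t)⁻¹ * (√t)⁻¹ * t = 1 := by field_simp; exact (Real.sq_sqrt ht.le).symm
    rw [hc_def]
    exact_mod_cast this
  refine unitarilyEquiv_of_star_mul_mul_eq (V := c • T)
    ((isUnit_smul_iff (Units.mk0 c hc) T).mpr hT) hφ hψ fun a => ?_
  calc star (c • T) * ψ a * (c • T) = (c * c) • (star T * ψ a * T) := by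
        simp only [star_smul, hc_def, Complex.star_def, Complex.conj_ofReal, smul_mul_assoc,
          mul_smul_comm, smul_smul]
    _ = φ a := by rw [h a, smul_smul, hcct, one_smul]

end UnitarilyEquiv

/-- a `G`-invariant UCP map which is pure as a completely positive map
(any CP map it dominates is a scalar multiple of it) is a C*-extreme point of
`UCP^{G_τ}(A, B(H))`. -/
theorem pure_is_cstarExtreme
    (τ : G → (A ≃⋆ₐ[ℂ] A)) (φ : A →ₗ[ℂ] (H →L[ℂ] H))
    (hφ : φ ∈ UCPG τ)
    (hpure : ∀ θ : A →ₗ[ℂ] (H →L[ℂ] H), IsCPMap θ → IsCPMap (φ - θ) →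
      ∃ t : ℝ, 0 ≤ t ∧ t ≤ 1 ∧ θ = (t : ℂ) • φ) :
    IsCStarExtreme (UCPG τ) φ := by
  refine ⟨hφ, fun n ψ T hψ hT _ hdecomp i => ?_⟩
  let θ j := starConj (T j) ∘ₗ ψ j
  have hθ : ∀ j ∈ Finset.univ, IsCPMap (θ j) := fun j _ => (hψ j).1.1.starConj_comp (T j)
  have hφθ : φ = ∑ j, θ j := LinearMap.ext fun a => by simpa [θ] using hdecomp a
  have hrest : IsCPMap (φ - θ i) := hφθ ▸ IsCPMap.sum_sub_of_mem hθ (Finset.mem_univ i)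
  obtain ⟨t, ht, -, hθi⟩ := hpure (θ i) (hθ i (Finset.mem_univ i)) hrest
  exact unitarilyEquiv_of_star_mul_mul_eq_smul (hT i) ht hφ.1.2 (hψ i).1.2
    fun a => LinearMap.congr_fun hθi a
end
end

section
/- Let φ ∈ UCP^{G_τ}(A, B(H)) with minimal Stinespring representation (π, V, K), associated unitary representation U_φ of G on K, and suppose the projection VV* commutes with every element of the commutant (π(A) ∪ U_φ(G))'. Given invertible T ∈ B(H) and S ∈ (π(A)∪U_φ(G))' with 0 ≤ S ≤ Id_K and T*ψ(a)T = V*π(a)SV for a UCP map ψ and all a ∈ A, define R := V*S^{1/2}V. Then VR = S^{1/2}V, R = (T*T)^{1/2}, R is invertible, and ψ(a) = (RT^{-1})* φ(a) (RT^{-1}) with RT^{-1} unitary. -/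
/-!
Since `VV*` commutes with `S`, it also commutes with `S^{1/2}`, so `VV* S^{1/2} V = S^{1/2} V`:
compression `X ↦ V* X V` by the isometry `V` becomes multiplicative as soon as one factor is
`S^{1/2}`. Hence `R = V* S^{1/2} V` is positive with `R² = V* S V = T* T` (the hypothesis at
`a = 1`), i.e. `R = |T|`, and `R φ(a) R = V* S^{1/2} π(a) S^{1/2} V = V* π(a) S V = T* ψ(a) T`.
Then `R T⁻¹` is unitary because `(R T⁻¹)* (R T⁻¹) = T⁻¹* T* T T⁻¹ = 1`, and conjugating by `T⁻¹`
gives the formula for `ψ`.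
-/

open scoped ComplexOrder

noncomputable section

variable {G : Type} [Group G]
variable {A : Type} [Ring A] [StarRing A] [Algebra ℂ A]
variable {H : Type} [NormedAddCommGroup H] [InnerProductSpace ℂ H] [CompleteSpace H]

set_option synthInstance.maxHeartbeats 400000

variable {K : Type} [NormedAddCommGroup K] [InnerProductSpace ℂ K] [CompleteSpace K]


/-- `(π, V, K)` is a minimal Stinespring representation of `φ`. -/
def IsMinimalStinespring (φ : A →ₗ[ℂ] (H →L[ℂ] H))
    (π : A →⋆ₐ[ℂ] (K →L[ℂ] K)) (V : H →L[ℂ] K) : Prop :=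
  (∀ h : H, ‖V h‖ = ‖h‖) ∧
  (∀ a : A, φ a = (ContinuousLinearMap.adjoint V).comp ((π a).comp V)) ∧
  (Submodule.span ℂ {x : K | ∃ (a : A) (h : H), x = π a (V h)}).topologicalClosure = ⊤

/-- The commutant of a set of operators. -/
def commutant (s : Set (K →L[ℂ] K)) : Set (K →L[ℂ] K) :=
  {T : K →L[ℂ] K | ∀ x ∈ s, T * x = x * T}

section StarMonoid

variable {M : Type*} [MonoidWithZero M] [StarMul M]

lemma isUnit_of_mul_self_eq_star_mul_self {R T : M} (hT : IsUnit T) (h : R * R = star T * T) :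
    IsUnit R :=
  (isUnit_pow_iff two_ne_zero).mp (by rw [sq, h]; exact hT.star.mul hT)

lemma mul_inverse_mem_unitary_of_mul_self_eq_star_mul_self {R T : M} (hR : IsSelfAdjoint R)
    (hT : IsUnit T) (h : R * R = star T * T) : R * Ring.inverse T ∈ unitary M := by
  refine ((isUnit_of_mul_self_eq_star_mul_self hT h).mul
    (isUnit_ringInverse.mpr hT)).mem_unitary_of_star_mul_self ?_
  have hTinv : T * Ring.inverse T = 1 := Ring.mul_inverse_cancel T hT
  calc star (R * Ring.inverse T) * (R * Ring.inverse T)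
      = star (Ring.inverse T) * (R * R) * Ring.inverse T := by
        rw [star_mul, hR.star_eq]; simp only [mul_assoc]
    _ = star (T * Ring.inverse T) * (T * Ring.inverse T) := by
        rw [h, star_mul]; simp only [mul_assoc]
    _ = 1 := by rw [hTinv, star_one, one_mul]

lemma eq_star_mul_mul_of_star_mul_mul_eq {R T X Y : M} (hR : IsSelfAdjoint R) (hT : IsUnit T)
    (h : star T * X * T = R * Y * R) :
    X = star (R * Ring.inverse T) * Y * (R * Ring.inverse T) := by
  have hTinv : T * Ring.inverse T = 1 := Ring.mul_inverse_cancel T hT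
  calc X = star (T * Ring.inverse T) * X * (T * Ring.inverse T) := by
        rw [hTinv, star_one, one_mul, mul_one]
    _ = star (Ring.inverse T) * (star T * X * T) * Ring.inverse T := by
        rw [star_mul]; simp only [mul_assoc]
    _ = star (R * Ring.inverse T) * Y * (R * Ring.inverse T) := by
        rw [h, star_mul, hR.star_eq]; simp only [mul_assoc]

end StarMonoid

lemma Commute.cfcSqrt_right {E : Type*} [CStarAlgebra E] [PartialOrder E] [StarOrderedRing E]
    {a b : E} (h : Commute a b) : Commute a (CFC.sqrt b) := by
  rw [CFC.sqrt_eq_cfc]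
  exact (h.symm.cfc_nnreal _).symm

namespace ContinuousLinearMap

open scoped InnerProduct

section Compression

variable {𝕜 H K : Type*} [RCLike 𝕜]
  [NormedAddCommGroup H] [InnerProductSpace 𝕜 H] [CompleteSpace H]
  [NormedAddCommGroup K] [InnerProductSpace 𝕜 K] [CompleteSpace K]
  {V : H →L[𝕜] K}

lemma comp_adjoint_comp_comp_of_commute (hV : V† ∘L V = 1) {B : K →L[𝕜] K}
    (hB : Commute (V ∘L V†) B) : V ∘L V† ∘L B ∘L V = B ∘L V := by
  calc V ∘L V† ∘L B ∘L V = ((V ∘L V†) * B) ∘L V := rfl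
    _ = B ∘L V ∘L V† ∘L V := by rw [hB.eq]; rfl
    _ = B ∘L V := by rw [hV]; rfl

lemma compress_comp_adjoint_of_commute (hV : V† ∘L V = 1) {B : K →L[𝕜] K}
    (hB : Commute (V ∘L V†) B) : (V† ∘L B ∘L V) ∘L V† = V† ∘L B := by
  calc (V† ∘L B ∘L V) ∘L V† = V† ∘L (B * (V ∘L V†)) := rfl
    _ = (V† ∘L V) ∘L V† ∘L B := by rw [← hB.eq]; rfl
    _ = V† ∘L B := by rw [hV]; rfl

lemma compress_mul_compress_of_commute_left (hV : V† ∘L V = 1) {B : K →L[𝕜] K}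
    (hB : Commute (V ∘L V†) B) (C : K →L[𝕜] K) :
    (V† ∘L B ∘L V) * (V† ∘L C ∘L V) = V† ∘L (B * C) ∘L V := by
  calc (V† ∘L B ∘L V) * (V† ∘L C ∘L V) = ((V† ∘L B ∘L V) ∘L V†) ∘L C ∘L V := rfl
    _ = V† ∘L (B * C) ∘L V := by rw [compress_comp_adjoint_of_commute hV hB]; rfl

lemma compress_mul_compress_of_commute_right (hV : V† ∘L V = 1) (B : K →L[𝕜] K)
    {C : K →L[𝕜] K} (hC : Commute (V ∘L V†) C) :
    (V† ∘L B ∘L V) * (V† ∘L C ∘L V) = V† ∘L (B * C) ∘L V := by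
  calc (V† ∘L B ∘L V) * (V† ∘L C ∘L V) = V† ∘L B ∘L (V ∘L V† ∘L C ∘L V) := rfl
    _ = V† ∘L (B * C) ∘L V := by rw [comp_adjoint_comp_comp_of_commute hV hC]; rfl

end Compression

section SqrtCompression

variable {H K : Type*}
  [NormedAddCommGroup H] [InnerProductSpace ℂ H] [CompleteSpace H]
  [NormedAddCommGroup K] [InnerProductSpace ℂ K] [CompleteSpace K]
  {V : H →L[ℂ] K} {S : K →L[ℂ] K}

lemma sqrt_compress_eq_compress_sqrt (hV : V† ∘L V = 1) (hS0 : 0 ≤ S)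
    (hS : Commute (V ∘L V†) S) : CFC.sqrt (V† ∘L S ∘L V) = V† ∘L CFC.sqrt S ∘L V := by
  refine CFC.sqrt_unique ?_ ?_
  · rw [compress_mul_compress_of_commute_left hV hS.cfcSqrt_right, CFC.sqrt_mul_sqrt_self S hS0]
  · rw [nonneg_iff_isPositive]
    exact ((nonneg_iff_isPositive _).mp (CFC.sqrt_nonneg S)).adjoint_conj V

lemma compress_sqrt_mul_compress_mul_compress_sqrt (hV : V† ∘L V = 1) (hS0 : 0 ≤ S)
    (hS : Commute (V ∘L V†) S) {B : K →L[ℂ] K} (hB : Commute S B) :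
    (V† ∘L CFC.sqrt S ∘L V) * (V† ∘L B ∘L V) * (V† ∘L CFC.sqrt S ∘L V) = V† ∘L (B * S) ∘L V := by
  have hSqrt : Commute (V ∘L V†) (CFC.sqrt S) := hS.cfcSqrt_right
  rw [compress_mul_compress_of_commute_left hV hSqrt,
    compress_mul_compress_of_commute_right hV _ hSqrt, mul_assoc,
    hB.symm.cfcSqrt_right.eq, ← mul_assoc, CFC.sqrt_mul_sqrt_self S hS0, hB.eq]

end SqrtCompression

end ContinuousLinearMap

open ContinuousLinearMap
open scoped InnerProduct

theorem radonNikodym_component_computation_general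
    (φ : A →ₗ[ℂ] (H →L[ℂ] H))
    (π : A →⋆ₐ[ℂ] (K →L[ℂ] K)) (V : H →L[ℂ] K)
    (hmin : IsMinimalStinespring φ π V)
    (U : G → (K →L[ℂ] K))
    (hcomm : ∀ X ∈ commutant (Set.range (fun a : A => π a) ∪ Set.range U),
      (V.comp (ContinuousLinearMap.adjoint V)) * X = X * (V.comp (ContinuousLinearMap.adjoint V)))
    (T : H →L[ℂ] H) (hT : IsUnit T)
    (S : K →L[ℂ] K)
    (hS : S ∈ commutant (Set.range (fun a : A => π a) ∪ Set.range U))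
    (hS0 : 0 ≤ S)
    (ψ : A →ₗ[ℂ] (H →L[ℂ] H)) (hψ : IsUCPMap ψ)
    (heq : ∀ a : A, star T * ψ a * T =
      (ContinuousLinearMap.adjoint V).comp (((π a) * S).comp V)) :
    V.comp ((ContinuousLinearMap.adjoint V).comp ((CFC.sqrt S).comp V)) =
      (CFC.sqrt S).comp V ∧
    (ContinuousLinearMap.adjoint V).comp ((CFC.sqrt S).comp V) = CFC.sqrt (star T * T) ∧
    IsUnit ((ContinuousLinearMap.adjoint V).comp ((CFC.sqrt S).comp V)) ∧
    ((ContinuousLinearMap.adjoint V).comp ((CFC.sqrt S).comp V)) * Ring.inverse T ∈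
      unitary (H →L[ℂ] H) ∧
    ∀ a : A, ψ a =
      star (((ContinuousLinearMap.adjoint V).comp ((CFC.sqrt S).comp V)) * Ring.inverse T) *
        φ a *
        (((ContinuousLinearMap.adjoint V).comp ((CFC.sqrt S).comp V)) * Ring.inverse T) := by
  have hV : V† ∘L V = 1 := V.norm_map_iff_adjoint_comp_self.mp hmin.1
  have hSV : Commute (V ∘L V†) S := hcomm S hS
  have hTT : star T * T = V† ∘L S ∘L V := by
    simpa only [map_one, hψ.2, mul_one, one_mul] using heq 1
  set R := V† ∘L CFC.sqrt S ∘L V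
  have hR : R = CFC.sqrt (star T * T) := by
    rw [hTT, sqrt_compress_eq_compress_sqrt hV hS0 hSV]
  have hRR : R * R = star T * T := by
    rw [hR, CFC.sqrt_mul_sqrt_self _ (star_mul_self_nonneg T)]
  have hRsa : IsSelfAdjoint R := hR ▸ (CFC.sqrt_nonneg _).isSelfAdjoint
  refine ⟨comp_adjoint_comp_comp_of_commute hV hSV.cfcSqrt_right, hR,
    isUnit_of_mul_self_eq_star_mul_self hT hRR,
    mul_inverse_mem_unitary_of_mul_self_eq_star_mul_self hRsa hT hRR,
    fun a => eq_star_mul_mul_of_star_mul_mul_eq hRsa hT ?_⟩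
  rw [heq a, hmin.2.1 a, compress_sqrt_mul_compress_mul_compress_sqrt hV hS0 hSV
    (hS (π a) (Or.inl ⟨a, rfl⟩))]

/-- under the assumption that `VV*` commutes with the commutant
`(π(A) ∪ U_φ(G))'`, given invertible `T`, `0 ≤ S ≤ 1` in the commutant and a UCP map
`ψ` with `T*ψ(a)T = V*π(a)SV`, the operator `R := V*S^{1/2}V` satisfies
`VR = S^{1/2}V`, `R = (T*T)^{1/2}`, `R` is invertible, `RT⁻¹` is unitary and
`ψ(a) = (RT⁻¹)* φ(a) (RT⁻¹)`. -/
theorem radonNikodym_component_computation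
    (τ : G → (A ≃⋆ₐ[ℂ] A)) (φ : A →ₗ[ℂ] (H →L[ℂ] H)) (hφ : φ ∈ UCPG τ)
    (π : A →⋆ₐ[ℂ] (K →L[ℂ] K)) (V : H →L[ℂ] K)
    (hmin : IsMinimalStinespring φ π V)
    (U : G → (K →L[ℂ] K))
    (hUuni : ∀ g, U g ∈ unitary (K →L[ℂ] K))
    (hUV : ∀ g, (U g).comp V = V)
    (hUπ : ∀ (g : G) (a : A), U g * π a * star (U g) = π (τ g a))
    (hcomm : ∀ X ∈ commutant (Set.range (fun a : A => π a) ∪ Set.range U),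
      (V.comp (ContinuousLinearMap.adjoint V)) * X = X * (V.comp (ContinuousLinearMap.adjoint V)))
    (T : H →L[ℂ] H) (hT : IsUnit T)
    (S : K →L[ℂ] K)
    (hS : S ∈ commutant (Set.range (fun a : A => π a) ∪ Set.range U))
    (hS0 : 0 ≤ S) (hS1 : S ≤ 1)
    (ψ : A →ₗ[ℂ] (H →L[ℂ] H)) (hψ : IsUCPMap ψ)
    (heq : ∀ a : A, star T * ψ a * T =
      (ContinuousLinearMap.adjoint V).comp (((π a) * S).comp V)) :
    V.comp ((ContinuousLinearMap.adjoint V).comp ((CFC.sqrt S).comp V)) =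
      (CFC.sqrt S).comp V ∧
    (ContinuousLinearMap.adjoint V).comp ((CFC.sqrt S).comp V) = CFC.sqrt (star T * T) ∧
    IsUnit ((ContinuousLinearMap.adjoint V).comp ((CFC.sqrt S).comp V)) ∧
    ((ContinuousLinearMap.adjoint V).comp ((CFC.sqrt S).comp V)) * Ring.inverse T ∈
      unitary (H →L[ℂ] H) ∧
    ∀ a : A, ψ a =
      star (((ContinuousLinearMap.adjoint V).comp ((CFC.sqrt S).comp V)) * Ring.inverse T) *
        φ a *
        (((ContinuousLinearMap.adjoint V).comp ((CFC.sqrt S).comp V)) * Ring.inverse T) :=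
  radonNikodym_component_computation_general φ π V hmin U hcomm T hT S hS hS0 ψ hψ heq
end
end
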